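/- Let K be a field and let a ≥ 3 be an integer. Let α be the 6×2 matrix over the polynomial ring K[x,y,z,w] with rows (w^{2a−1}, 0), (z^{2a−1}, w^{2a−1} + x^{a−2}·z^{a+1}), (−x, 0), (−y, −x), (0, −z^{a+1}), (y·z^{a−2}, x·z^{a−2} + y^{a−1}). Then for every point p = (x₀,y₀,z₀,w₀) ∈ K⁴ with p ≠ (0,0,0,0), the 6×2 matrix over K obtained by evaluating every entry of α at p has rank 2; equivalently, the induced linear map K² → K⁶ is injective. -/
import Mathlib


open MvPolynomial

/-- The left-hand matrix α of the monad, over `K[x,y,z,w]` with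
variables `x = X 0`, `y = X 1`, `z = X 2`, `w = X 3`. -/
noncomputable def alphaMat (K : Type*) [Field K] (a : ℕ) :
    Matrix (Fin 6) (Fin 2) (MvPolynomial (Fin 4) K) :=
  !![(X 3) ^ (2 * a - 1), 0;
     (X 2) ^ (2 * a - 1), (X 3) ^ (2 * a - 1) + (X 0) ^ (a - 2) * (X 2) ^ (a + 1);
     -(X 0), 0;
     -(X 1), -(X 0);
     0, -((X 2) ^ (a + 1));
     X 1 * (X 2) ^ (a - 2), X 0 * (X 2) ^ (a - 2) + (X 1) ^ (a - 1)]

/-- At every point `p = (x₀,y₀,z₀,w₀) ≠ 0` of `K⁴`, the evaluated matrix α(p)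
has rank 2; equivalently, the induced linear map `K² → K⁶` is injective. -/
theorem alpha_eval_rank_two (K : Type*) [Field K] (a : ℕ) (ha : 3 ≤ a)
    (x₀ y₀ z₀ w₀ : K) (hp : (x₀, y₀, z₀, w₀) ≠ (0, 0, 0, 0)) :
    ((alphaMat K a).map (eval ![x₀, y₀, z₀, w₀])).rank = 2 ∧
      Function.Injective
        (((alphaMat K a).map (eval ![x₀, y₀, z₀, w₀])).mulVecLin) := by
  set M := (alphaMat K a).map (eval ![x₀, y₀, z₀, w₀]) with hM
  have h21 : 2 * a - 1 ≠ 0 := by omega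
  have ha2 : a - 2 ≠ 0 := by omega
  have ha1' : a - 1 ≠ 0 := by omega
  have hinj : Function.Injective M.mulVecLin := by
    rw [← LinearMap.ker_eq_bot, LinearMap.ker_eq_bot']
    intro v hv
    simp only [Matrix.mulVecLin_apply] at hv
    have e0 := congrFun hv 0
    have e1 := congrFun hv 1
    have e2 := congrFun hv 2
    have e3 := congrFun hv 3
    have e4 := congrFun hv 4
    have e5 := congrFun hv 5
    simp [hM, alphaMat, Matrix.mulVec, dotProduct, Fin.sum_univ_two,
      Matrix.cons_val_succ, show ((5 : Fin 6)) = Fin.succ 4 from rfl] at e0 e1 e2 e3 e4 e5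
    have hv0 : v 0 = 0 ∧ v 1 = 0 := by
      by_cases hx : x₀ = 0
      · by_cases hz : z₀ = 0
        · by_cases hw : w₀ = 0
          · have hy : y₀ ≠ 0 := by
              intro hy; exact hp (by simp [hx, hy, hz, hw])
            have h0 : v 0 = 0 := by
              rw [hx] at e3
              simp only [zero_mul, neg_zero, add_zero, neg_eq_zero] at e3
              exact (mul_eq_zero.mp e3).resolve_left hy
            refine ⟨h0, ?_⟩
            rw [hx, hz, h0, zero_pow ha2] at e5
            simp only [mul_zero, zero_mul, zero_add, add_zero] at e5
            exact (mul_eq_zero.mp e5).resolve_left (pow_ne_zero _ hy)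
          · have h0 : v 0 = 0 := by
              rcases e0 with ⟨h, _⟩ | h
              · exact absurd h hw
              · exact h
            refine ⟨h0, ?_⟩
            rw [hz, h0, zero_pow h21, zero_pow (by omega : a + 1 ≠ 0)] at e1
            simp only [zero_mul, zero_add, mul_zero, add_zero] at e1
            exact (mul_eq_zero.mp e1).resolve_left (pow_ne_zero _ hw)
        · have h1 : v 1 = 0 := e4.resolve_left hz
          refine ⟨?_, h1⟩
          rw [h1, mul_zero, add_zero] at e1
          exact (mul_eq_zero.mp e1).resolve_left (pow_ne_zero _ hz)
      · have h0 : v 0 = 0 := e2.resolve_left hx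
        refine ⟨h0, ?_⟩
        rw [h0, mul_zero, neg_zero, zero_add, neg_eq_zero] at e3
        exact (mul_eq_zero.mp e3).resolve_left hx
    ext i
    fin_cases i
    · exact hv0.1
    · exact hv0.2
  refine ⟨?_, hinj⟩
  rw [Matrix.rank, LinearMap.finrank_range_of_inj hinj]
  simp
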